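/- arXiv:1009.0566 — 2 statements merged into one kernel-verified Lean document; each statement's English description precedes it below -/
import Mathlib

section
/- For every odd integer l ≥ 3 there exists a simple graph U on a countable type such that: (a) for every odd j with 3 ≤ j ≤ l there is no graph homomorphism from the cycle graph C_j into U, and (b) every simple graph G on a countable type admitting no graph homomorphism from C_j for any odd j with 3 ≤ j ≤ l has a graph embedding (preserving adjacency and non-adjacency) into U. -/
universe u

/-!
For a graph `G` and a cap `L`, let `W n u v` say that `G` has a walk of length `n ≤ L` from `u`
to `v`. When `G` has no odd closed walk of length at most `L`, these relations form a *walk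
system*: `W 0` is equality, and they are symmetric, closed under concatenation below the cap and
free of odd loops. Conversely the length-one relation of a walk system is a graph with no short
odd closed walk, and a map preserving and reflecting all the `W n` is a graph embedding.

Walk systems have one-point amalgamation: the relations of a new point to a finite set `A` extend
to the whole system by routing every walk through `A`. Realizing every finite one-point type over
`ℕ` at infinitely many stages yields a generic walk system on `ℕ` with the extension property, and
a forth construction embeds every countable walk system into it. Its length-one graph is the
universal graph.
-/

namespace SimpleGraph

variable {V : Type*} {G : SimpleGraph V}

theorem Walk.adj_getVert_of_sub_val_eq_one {u : V} (c : G.Walk u u) {a b : Fin c.length}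
    (h : (a - b).val = 1) :
    G.Adj (c.getVert b) (c.getVert a) := by
  rcases le_or_gt b a with hba | hab
  · rw [Fin.coe_sub_iff_le.2 hba] at h
    convert c.adj_getVert_succ b.isLt using 2
    omega
  · rw [Fin.coe_sub_iff_lt.2 hab] at h
    have hb : b.val + 1 = c.length := by omega
    have ha : a.val = 0 := by omega
    simpa [ha, hb] using c.adj_getVert_succ b.isLt

def Walk.cycleGraphHom {u : V} (c : G.Walk u u) :
    cycleGraph c.length →g G where
  toFun i := c.getVert i
  map_rel' h := (cycleGraph_adj'.1 h).elim (fun h => (c.adj_getVert_of_sub_val_eq_one h).symm)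
    c.adj_getVert_of_sub_val_eq_one

theorem forall_isEmpty_cycleGraph_hom_iff {L : ℕ} :
    (∀ j, 3 ≤ j → j ≤ L → Odd j → IsEmpty (cycleGraph j →g G)) ↔
      ∀ u (c : G.Walk u u), c.length ≤ L → ¬Odd c.length := by
  constructor
  · intro hG u c hL hodd
    rcases Nat.lt_or_ge c.length 3 with h3 | h3
    · obtain ⟨v, huv, p, rfl⟩ : ∃ v, ∃ (h : G.Adj u v) (p : G.Walk v u), c = .cons h p := by
        cases c with
        | nil => simp at hodd
        | cons h p => exact ⟨_, h, p, rfl⟩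
      have hp : p.length = 0 := by
        obtain ⟨k, hk⟩ := hodd
        simp only [Walk.length_cons] at hk h3
        omega
      exact G.loopless.irrefl u (p.eq_of_length_eq_zero hp ▸ huv)
    · exact (hG _ h3 hL hodd).false c.cycleGraphHom
  · rintro hG j h3 hL hodd
    obtain ⟨m, rfl⟩ : ∃ m, j = m + 3 := ⟨j - 3, by omega⟩
    refine ⟨fun f => hG _ ((cycleGraph.cycle m).map f) ?_ ?_⟩ <;> simpa

end SimpleGraph

namespace OddGirth

structure IsWalkSystem (L : ℕ) {V : Type*} (W : ℕ → V → V → Prop) : Prop where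
  le_cap {n : ℕ} {u v : V} : W n u v → n ≤ L
  zero_iff (u v : V) : W 0 u v ↔ u = v
  symm {n : ℕ} {u v : V} : W n u v → W n v u
  trans {q r : ℕ} {u v w : V} : W q u v → W r v w → q + r ≤ L → W (q + r) u w
  not_odd {n : ℕ} {u : V} : W n u u → ¬Odd n

/-- The possible relations `t n b = W n x b` (for `b ∈ A`) and `s n = W n x x` of a new point `x`:
exactly the walk-system axioms that mention `x`. -/
structure IsOnePointType (L : ℕ) {V : Type*} (W : ℕ → V → V → Prop) (A : Set V)
    (t : ℕ → V → Prop) (s : ℕ → Prop) : Prop where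
  mem {n : ℕ} {b : V} : t n b → b ∈ A
  t_le_cap {n : ℕ} {b : V} : t n b → n ≤ L
  s_le_cap {n : ℕ} : s n → n ≤ L
  not_t_zero (b : V) : ¬t 0 b
  s_zero : s 0
  t_trans {q r : ℕ} {b c : V} : t q b → W r b c → c ∈ A → q + r ≤ L → t (q + r) c
  rel_of_t_t {q r : ℕ} {b c : V} : t q b → t r c → q + r ≤ L → W (q + r) b c
  s_trans_t {q r : ℕ} {b : V} : s q → t r b → q + r ≤ L → t (q + r) b
  s_of_t_t {q r : ℕ} {b : V} : t q b → t r b → q + r ≤ L → s (q + r)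
  s_trans_s {q r : ℕ} : s q → s r → q + r ≤ L → s (q + r)
  s_not_odd {n : ℕ} : s n → ¬Odd n

variable {L : ℕ} {V X : Type*}

namespace IsWalkSystem

variable {W : ℕ → V → V → Prop}

theorem refl (hW : IsWalkSystem L W) (u : V) : W 0 u u := (hW.zero_iff u u).2 rfl

theorem comm (hW : IsWalkSystem L W) {n : ℕ} {u v : V} : W n u v ↔ W n v u :=
  ⟨hW.symm, hW.symm⟩

theorem comap (hW : IsWalkSystem L W) {f : X → V} (hf : f.Injective) :
    IsWalkSystem L fun n x y => W n (f x) (f y) where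
  le_cap := hW.le_cap
  zero_iff _ _ := (hW.zero_iff _ _).trans hf.eq_iff
  symm := hW.symm
  trans := hW.trans
  not_odd := hW.not_odd

end IsWalkSystem

namespace IsOnePointType

variable {W W' : ℕ → V → V → Prop} {A : Set V} {t : ℕ → V → Prop} {s : ℕ → Prop}

theorem congr (hT : IsOnePointType L W A t s) (h : ∀ n, ∀ a ∈ A, ∀ b ∈ A, W n a b ↔ W' n a b) :
    IsOnePointType L W' A t s where
  __ := hT
  t_trans ht hbc hc := hT.t_trans ht ((h _ _ (hT.mem ht) _ hc).2 hbc) hc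
  rel_of_t_t hb hc hL := (h _ _ (hT.mem hb) _ (hT.mem hc)).1 (hT.rel_of_t_t hb hc hL)

end IsOnePointType

section Amalgam

variable {E : ℕ → V → V → Prop} {A : Set V} {t : ℕ → V → Prop} {s : ℕ → Prop}

def extendedType (L : ℕ) (E : ℕ → V → V → Prop) (t : ℕ → V → Prop) (n : ℕ) (b : V) : Prop :=
  n ≤ L ∧ ∃ a q r, q + r = n ∧ t q a ∧ E r a b

theorem extendedType_iff (hE : IsWalkSystem L E) (hT : IsOnePointType L E A t s) {n : ℕ} {b : V}
    (hb : b ∈ A) : extendedType L E t n b ↔ t n b := by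
  refine ⟨?_, fun h => ⟨hT.t_le_cap h, b, n, 0, rfl, h, hE.refl b⟩⟩
  rintro ⟨hn, a, q, r, rfl, ht, hab⟩
  exact hT.t_trans ht hab hb hn

theorem IsOnePointType.extend (hE : IsWalkSystem L E) (hT : IsOnePointType L E A t s) :
    IsOnePointType L E Set.univ (extendedType L E t) s where
  mem _ := trivial
  t_le_cap h := h.1
  s_le_cap := hT.s_le_cap
  not_t_zero b := by
    rintro ⟨-, a, q, r, hqr, ht, -⟩
    obtain rfl : q = 0 := by omega
    exact hT.not_t_zero a ht
  s_zero := hT.s_zero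
  t_trans := by
    rintro q r b c ⟨-, a, q', r', rfl, ht, hab⟩ hbc - hL
    exact ⟨hL, a, q', r' + r, by omega, ht, hE.trans hab hbc (by omega)⟩
  rel_of_t_t := by
    rintro q r b c ⟨-, a, q₁, r₁, rfl, ha, hab⟩ ⟨-, a', q₂, r₂, rfl, ha', hac⟩ hL
    have hbc := hE.trans (hE.trans (hE.symm hab) (hT.rel_of_t_t ha ha' (by omega)) (by omega))
      hac (by omega)
    exact (by omega : r₁ + (q₁ + q₂) + r₂ = q₁ + r₁ + (q₂ + r₂)) ▸ hbc
  s_trans_t := by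
    rintro q r b hs ⟨-, a, q', r', rfl, ht, hab⟩ hL
    exact ⟨hL, a, q + q', r', by omega, hT.s_trans_t hs ht (by omega), hab⟩
  s_of_t_t := by
    rintro q r b ⟨-, a, q₁, r₁, rfl, ha, hab⟩ ⟨-, a', q₂, r₂, rfl, ha', ha'b⟩ hL
    have ha₂ : t (q₁ + (r₁ + r₂)) a' :=
      hT.t_trans ha (hE.trans hab (hE.symm ha'b) (by omega)) (hT.mem ha') (by omega)
    exact (by omega : q₁ + (r₁ + r₂) + q₂ = q₁ + r₁ + (q₂ + r₂)) ▸ hT.s_of_t_t ha₂ ha' (by omega)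
  s_trans_s := hT.s_trans_s
  s_not_odd := hT.s_not_odd

def adjoin (E : ℕ → V → V → Prop) (t : ℕ → V → Prop) (s : ℕ → Prop) :
    ℕ → Option V → Option V → Prop
  | n, some u, some v => E n u v
  | n, none, some v => t n v
  | n, some u, none => t n u
  | n, none, none => s n

theorem isWalkSystem_adjoin (hE : IsWalkSystem L E) (hT : IsOnePointType L E Set.univ t s) :
    IsWalkSystem L (adjoin E t s) where
  le_cap {n u v} := by
    cases u <;> cases v
    exacts [hT.s_le_cap, hT.t_le_cap, hT.t_le_cap, hE.le_cap]
  zero_iff u v := by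
    cases u <;> cases v <;> simp only [adjoin, reduceCtorEq, Option.some_inj, iff_false, iff_true]
    exacts [hT.s_zero, hT.not_t_zero _, hT.not_t_zero _, hE.zero_iff _ _]
  symm {n u v} := by
    cases u <;> cases v
    exacts [id, id, id, hE.symm]
  trans {q r u v w} := by
    cases u <;> cases v <;> cases w <;> simp only [adjoin] <;> intro h₁ h₂ hL
    · exact hT.s_trans_s h₁ h₂ hL
    · exact hT.s_trans_t h₁ h₂ hL
    · exact hT.s_of_t_t h₁ h₂ hL
    · exact hT.t_trans h₁ h₂ trivial hL
    · exact add_comm r q ▸ hT.s_trans_t h₂ h₁ (by omega)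
    · exact hT.rel_of_t_t h₁ h₂ hL
    · exact add_comm r q ▸ hT.t_trans h₂ (hE.symm h₁) trivial (by omega)
    · exact hE.trans h₁ h₂ hL
  not_odd {n u} := by
    cases u
    exacts [hT.s_not_odd, hE.not_odd]

end Amalgam

def HasExtensionProperty (L : ℕ) (M : ℕ → X → X → Prop) : Prop :=
  ∀ A : Set X, A.Finite → ∀ t s, IsOnePointType L M A t s →
    ∃ x, (∀ n, ∀ a ∈ A, M n x a ↔ t n a) ∧ ∀ n, M n x x ↔ s n

section Generic

/-- A one-point type over a finite subset of `ℕ`, encoded by finite sets. -/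
abbrev Task : Type := Finset ℕ × Finset (ℕ × ℕ) × Finset ℕ

namespace Task

def t (d : Task) (n b : ℕ) : Prop := (n, b) ∈ d.2.1

def s (d : Task) (n : ℕ) : Prop := n ∈ d.2.2

def IsAdmissible (L : ℕ) (E : ℕ → ℕ → ℕ → Prop) (p : ℕ) (d : Task) : Prop :=
  (∀ a ∈ d.1, a < p) ∧ IsOnePointType L E d.1 d.t d.s

end Task

/-- Every task occurs arbitrarily late, because the index only enters through `unpair`. -/
noncomputable def task (k : ℕ) : Task := (exists_surjective_nat Task).choose k.unpair.1

theorem exists_task_eq (d : Task) (N : ℕ) : ∃ k, N ≤ k ∧ task k = d := by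
  obtain ⟨i, hi⟩ := (exists_surjective_nat Task).choose_spec d
  exact ⟨Nat.pair i N, Nat.right_le_pair i N, by simp [task, hi]⟩

def optionAt (p x : ℕ) : Option ℕ := if x = p then none else some x

theorem optionAt_injective (p : ℕ) : (optionAt p).Injective := by
  intro x y h
  unfold optionAt at h
  split_ifs at h <;> simp_all

/-- At stage `k + 1` the point `k + 1`, isolated so far, becomes a realization of `task k`
whenever that task is admissible. -/
noncomputable def stage (L : ℕ) : ℕ → ℕ → ℕ → ℕ → Prop
  | 0 => fun n u v => n = 0 ∧ u = v
  | k + 1 => by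
    classical
    exact if (task k).IsAdmissible L (stage L k) (k + 1) then
      fun n u v => adjoin (stage L k) (extendedType L (stage L k) (task k).t) (task k).s n
        (optionAt (k + 1) u) (optionAt (k + 1) v)
    else stage L k

theorem isWalkSystem_stage (L : ℕ) : ∀ k, IsWalkSystem L (stage L k)
  | 0 => {
      le_cap := by rintro n u v ⟨rfl, -⟩; exact L.zero_le
      zero_iff u v := by simp [stage]
      symm := by rintro n u v ⟨rfl, rfl⟩; exact ⟨rfl, rfl⟩
      trans := by rintro q r u v w ⟨rfl, rfl⟩ ⟨rfl, rfl⟩ -; exact ⟨rfl, rfl⟩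
      not_odd := by rintro n u ⟨rfl, -⟩; exact Nat.not_odd_zero }
  | k + 1 => by
    rw [stage]
    split_ifs with h
    · exact (isWalkSystem_adjoin (isWalkSystem_stage L k)
        (h.2.extend (isWalkSystem_stage L k))).comap (optionAt_injective _)
    · exact isWalkSystem_stage L k

theorem stage_succ_iff {k n u v : ℕ} (hu : u ≤ k) (hv : v ≤ k) :
    stage L (k + 1) n u v ↔ stage L k n u v := by
  rw [stage]
  split_ifs
  · simp [optionAt, adjoin, show u ≠ k + 1 by omega, show v ≠ k + 1 by omega]
  · rfl

theorem stage_iff_of_le {k k' n u v : ℕ} (hk : k ≤ k') (hu : u ≤ k) (hv : v ≤ k) :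
    stage L k' n u v ↔ stage L k n u v := by
  induction k', hk using Nat.le_induction with
  | base => rfl
  | succ k' hk ih => exact (stage_succ_iff (by omega) (by omega)).trans ih

def generic (L n u v : ℕ) : Prop := stage L (max u v) n u v

theorem generic_iff_stage {k n u v : ℕ} (hu : u ≤ k) (hv : v ≤ k) :
    generic L n u v ↔ stage L k n u v :=
  (stage_iff_of_le (by omega) (le_max_left u v) (le_max_right u v)).symm

theorem isWalkSystem_generic (L : ℕ) : IsWalkSystem L (generic L) where
  le_cap h := (isWalkSystem_stage L _).le_cap h
  zero_iff u v := (isWalkSystem_stage L _).zero_iff u v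
  symm {n u v} h := by
    rw [generic, max_comm]
    exact (isWalkSystem_stage L _).symm h
  trans {q r u v w} h₁ h₂ hL := by
    rw [generic_iff_stage (k := max u (max v w)) (by omega) (by omega)] at h₁ h₂ ⊢
    exact (isWalkSystem_stage L _).trans h₁ h₂ hL
  not_odd h := (isWalkSystem_stage L _).not_odd h

theorem stage_succ_new_iff {k n a : ℕ} (h : (task k).IsAdmissible L (stage L k) (k + 1))
    (ha : a ∈ (task k).1) : stage L (k + 1) n (k + 1) a ↔ (task k).t n a := by
  rw [stage, if_pos h]
  simp only [optionAt, ↓reduceIte, if_neg (h.1 a ha).ne, adjoin]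
  exact extendedType_iff (isWalkSystem_stage L k) h.2 ha

theorem stage_succ_new_self_iff {k n : ℕ} (h : (task k).IsAdmissible L (stage L k) (k + 1)) :
    stage L (k + 1) n (k + 1) (k + 1) ↔ (task k).s n := by
  rw [stage, if_pos h]
  simp [optionAt, adjoin]

theorem exists_task_eq_type {W : ℕ → ℕ → ℕ → Prop} {A : Set ℕ} {t : ℕ → ℕ → Prop}
    {s : ℕ → Prop} (hA : A.Finite) (hT : IsOnePointType L W A t s) :
    ∃ d : Task, (d.1 : Set ℕ) = A ∧ d.t = t ∧ d.s = s := by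
  classical
  refine ⟨(hA.toFinset, {nb ∈ Finset.range (L + 1) ×ˢ hA.toFinset | t nb.1 nb.2},
    {n ∈ Finset.range (L + 1) | s n}), hA.coe_toFinset, ?_, ?_⟩
  · ext n b
    simp only [Task.t, Finset.mem_filter, Finset.mem_product, Finset.mem_range,
      Set.Finite.mem_toFinset, and_iff_right_iff_imp]
    exact fun h => ⟨Nat.lt_succ_of_le (hT.t_le_cap h), hT.mem h⟩
  · ext n
    simp only [Task.s, Finset.mem_filter, Finset.mem_range, and_iff_right_iff_imp]
    exact fun h => Nat.lt_succ_of_le (hT.s_le_cap h)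

theorem hasExtensionProperty_generic (L : ℕ) : HasExtensionProperty L (generic L) := by
  intro A hA t s hT
  obtain ⟨d, rfl, rfl, rfl⟩ := exists_task_eq_type hA hT
  obtain ⟨k, hk, rfl⟩ := exists_task_eq d (d.1.sup id)
  have hk : ∀ a ∈ (task k).1, a ≤ k := fun a ha => (Finset.le_sup (f := id) ha).trans hk
  have hadm : (task k).IsAdmissible L (stage L k) (k + 1) :=
    ⟨fun a ha => Nat.lt_succ_of_le (hk a ha),
      hT.congr fun n a ha b hb => generic_iff_stage (hk a ha) (hk b hb)⟩
  refine ⟨k + 1, fun n a ha => ?_, fun n => ?_⟩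
  · exact (generic_iff_stage le_rfl (Nat.le_succ_of_le (hk a ha))).trans (stage_succ_new_iff hadm ha)
  · exact (generic_iff_stage le_rfl le_rfl).trans (stage_succ_new_self_iff hadm)

end Generic

section Embedding

variable {E : ℕ → V → V → Prop} {M : ℕ → X → X → Prop}

theorem IsOnePointType.image (hE : IsWalkSystem L E) (hM : IsWalkSystem L M) {A : Set V} {v : V}
    (hv : v ∉ A) {g : V → X} (hg : ∀ n, ∀ u ∈ A, ∀ u' ∈ A, E n u u' ↔ M n (g u) (g u')) :
    IsOnePointType L M (g '' A) (fun n x => ∃ u ∈ A, g u = x ∧ E n v u) (fun n => E n v v) := by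
  have hinj : ∀ u ∈ A, ∀ u' ∈ A, g u = g u' → u = u' := fun u hu u' hu' h =>
    (hE.zero_iff u u').1 ((hg 0 u hu u' hu').2 (h ▸ hM.refl _))
  exact {
    mem := by rintro n _ ⟨u, hu, rfl, -⟩; exact ⟨u, hu, rfl⟩
    t_le_cap := by rintro n _ ⟨u, -, -, h⟩; exact hE.le_cap h
    s_le_cap := hE.le_cap
    not_t_zero := by rintro _ ⟨u, hu, -, h⟩; exact hv ((hE.zero_iff v u).1 h ▸ hu)
    s_zero := hE.refl v
    t_trans := by
      rintro q r _ _ ⟨u, hu, rfl, h⟩ huu' ⟨u', hu', rfl⟩ hL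
      exact ⟨u', hu', rfl, hE.trans h ((hg r u hu u' hu').2 huu') hL⟩
    rel_of_t_t := by
      rintro q r _ _ ⟨u, hu, rfl, h⟩ ⟨u', hu', rfl, h'⟩ hL
      exact (hg _ u hu u' hu').1 (hE.trans (hE.symm h) h' hL)
    s_trans_t := by
      rintro q r _ h ⟨u, hu, rfl, h'⟩ hL
      exact ⟨u, hu, rfl, hE.trans h h' hL⟩
    s_of_t_t := by
      rintro q r _ ⟨u, hu, rfl, h⟩ ⟨u', hu', hgu', h'⟩ hL
      obtain rfl := hinj u' hu' u hu hgu'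
      exact hE.trans h (hE.symm h') hL
    s_trans_s := hE.trans
    s_not_odd := hE.not_odd }

theorem exists_realization (hE : IsWalkSystem L E) (hM : IsWalkSystem L M)
    (hext : HasExtensionProperty L M) {A : Set V} (hA : A.Finite) {v : V} (hv : v ∉ A)
    {g : V → X} (hg : ∀ n, ∀ u ∈ A, ∀ u' ∈ A, E n u u' ↔ M n (g u) (g u')) :
    ∃ x, (∀ n, ∀ u ∈ A, M n x (g u) ↔ E n v u) ∧ ∀ n, M n x x ↔ E n v v := by
  obtain ⟨x, hx, hxx⟩ := hext _ (hA.image g) _ _ (IsOnePointType.image hE hM hv hg)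
  refine ⟨x, fun n u hu => (hx n _ ⟨u, hu, rfl⟩).trans ⟨?_, fun h => ⟨u, hu, rfl, h⟩⟩, hxx⟩
  rintro ⟨u', hu', hgu', h⟩
  rwa [(hE.zero_iff u' u).1 ((hg 0 u' hu' u hu).2 (hgu' ▸ hM.refl _))] at h

variable (E M) (e : V → ℕ)

def IsEmbeddingAt (f : V → X) (v : V) : Prop :=
  (∀ n u, e u < e v → (M n (f v) (f u) ↔ E n v u)) ∧ ∀ n, M n (f v) (f v) ↔ E n v v

noncomputable def embedding [Nonempty X] (v : V) : X :=
  Classical.epsilon fun x =>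
    (∀ n u, e u < e v → (M n x (embedding u) ↔ E n v u)) ∧ ∀ n, M n x x ↔ E n v v
termination_by e v

variable {E M e}

theorem IsEmbeddingAt.iff (hE : IsWalkSystem L E) (hM : IsWalkSystem L M) (he : e.Injective)
    {f : V → X} {u v : V} (hu : IsEmbeddingAt E M e f u) (hv : IsEmbeddingAt E M e f v) (n : ℕ) :
    E n u v ↔ M n (f u) (f v) := by
  rcases lt_trichotomy (e u) (e v) with h | h | h
  · rw [hE.comm, hM.comm]
    exact (hv.1 n u h).symm
  · obtain rfl := he h
    exact (hu.2 n).symm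
  · exact (hu.1 n v h).symm

theorem isEmbeddingAt_embedding [Nonempty X] (hE : IsWalkSystem L E) (hM : IsWalkSystem L M)
    (hext : HasExtensionProperty L M) (he : e.Injective) (v : V) :
    IsEmbeddingAt E M e (embedding E M e) v := by
  induction hv : e v using Nat.strong_induction_on generalizing v with
  | _ k ih =>
  subst hv
  have hg : ∀ n, ∀ u ∈ {u | e u < e v}, ∀ u' ∈ {u | e u < e v},
      E n u u' ↔ M n (embedding E M e u) (embedding E M e u') := fun n u hu u' hu' =>
    (ih _ hu u rfl).iff hE hM he (ih _ hu' u' rfl) n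
  rw [IsEmbeddingAt, embedding]
  exact Classical.epsilon_spec (exists_realization hE hM hext
    ((Set.finite_Iio (e v)).preimage he.injOn) (lt_irrefl (e v)) hg)

theorem exists_embedding [Countable V] [Nonempty X] (hE : IsWalkSystem L E)
    (hM : IsWalkSystem L M) (hext : HasExtensionProperty L M) :
    ∃ f : V → X, ∀ n u v, E n u v ↔ M n (f u) (f v) := by
  obtain ⟨e, he⟩ := Countable.exists_injective_nat V
  have h := isEmbeddingAt_embedding hE hM hext he
  exact ⟨embedding E M e, fun n u v => (h u).iff hE hM he (h v) n⟩

end Embedding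

section Graphs

open SimpleGraph

def walkSystem (G : SimpleGraph V) (L n : ℕ) (u v : V) : Prop :=
  n ≤ L ∧ ∃ w : G.Walk u v, w.length = n

theorem isWalkSystem_walkSystem {G : SimpleGraph V}
    (hG : ∀ u (c : G.Walk u u), c.length ≤ L → ¬Odd c.length) :
    IsWalkSystem L (walkSystem G L) where
  le_cap h := h.1
  zero_iff u v := ⟨fun ⟨_, w, hw⟩ => w.eq_of_length_eq_zero hw,
    by rintro rfl; exact ⟨L.zero_le, .nil, rfl⟩⟩
  symm := fun ⟨hn, w, hw⟩ => ⟨hn, w.reverse, by simp [hw]⟩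
  trans := fun ⟨_, w₁, hw₁⟩ ⟨_, w₂, hw₂⟩ hL => ⟨hL, w₁.append w₂, by simp [hw₁, hw₂]⟩
  not_odd := fun ⟨hn, w, hw⟩ => hw ▸ hG _ w (hw ▸ hn)

theorem walkSystem_one_iff {G : SimpleGraph V} (hL : 1 ≤ L) {u v : V} :
    walkSystem G L 1 u v ↔ G.Adj u v := by
  refine ⟨fun ⟨_, w, hw⟩ => ?_, fun h => ⟨hL, h.toWalk, rfl⟩⟩
  have h := w.adj_getVert_succ (i := 0) (by omega)
  rwa [w.getVert_zero, zero_add, ← hw, w.getVert_length] at h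

namespace IsWalkSystem

variable {W : ℕ → V → V → Prop}

def graph (hW : IsWalkSystem L W) : SimpleGraph V where
  Adj := W 1
  symm := ⟨fun _ _ => hW.symm⟩
  loopless := ⟨fun _ h => hW.not_odd h odd_one⟩

theorem walk_length (hW : IsWalkSystem L W) {u v : V} (w : hW.graph.Walk u v)
    (hw : w.length ≤ L) : W w.length u v := by
  induction w with
  | nil => exact hW.refl _
  | cons h p ih =>
    rw [Walk.length_cons, add_comm] at hw ⊢
    exact hW.trans h (ih (by omega)) hw

theorem graph_closedWalk_not_odd (hW : IsWalkSystem L W) {u : V} (c : hW.graph.Walk u u)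
    (hc : c.length ≤ L) : ¬Odd c.length :=
  hW.not_odd (hW.walk_length c hc)

end IsWalkSystem

def graphEmbedding {W : ℕ → V → V → Prop} {M : ℕ → X → X → Prop} (hW : IsWalkSystem L W)
    (hM : IsWalkSystem L M) {G : SimpleGraph V} (hG : ∀ u v, W 1 u v ↔ G.Adj u v) {f : V → X}
    (hf : ∀ n u v, W n u v ↔ M n (f u) (f v)) : G ↪g hM.graph where
  toFun := f
  inj' u v h := (hW.zero_iff u v).1 ((hf 0 u v).2 (h ▸ hM.refl _))
  map_rel_iff' {u v} := (hf 1 u v).symm.trans (hG u v)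

end Graphs

end OddGirth

theorem forbh_oddCycles_universal_general (l : ℕ) (hl : 3 ≤ l) :
    ∃ (W : Type) (_ : Countable W) (U : SimpleGraph W),
      (∀ j, 3 ≤ j → j ≤ l → Odd j → IsEmpty (SimpleGraph.cycleGraph j →g U)) ∧
      ∀ (V : Type u) [Countable V] (G : SimpleGraph V),
        (∀ j, 3 ≤ j → j ≤ l → Odd j → IsEmpty (SimpleGraph.cycleGraph j →g G)) →
        Nonempty (G ↪g U) := by
  have hM := OddGirth.isWalkSystem_generic l
  refine ⟨ℕ, inferInstance, hM.graph,
    SimpleGraph.forall_isEmpty_cycleGraph_hom_iff.2 fun _ c => hM.graph_closedWalk_not_odd c, ?_⟩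
  intro V _ G hG
  have hW := OddGirth.isWalkSystem_walkSystem (SimpleGraph.forall_isEmpty_cycleGraph_hom_iff.1 hG)
  obtain ⟨f, hf⟩ := OddGirth.exists_embedding hW hM (OddGirth.hasExtensionProperty_generic l)
  exact ⟨OddGirth.graphEmbedding hW hM (fun _ _ => OddGirth.walkSystem_one_iff (by omega)) hf⟩

/-- For every odd `l ≥ 3`, the class of countable graphs admitting no homomorphism
from any odd cycle `C_j` with `3 ≤ j ≤ l` contains an embedding-universal graph. -/
theorem forbh_oddCycles_universal (l : ℕ) (hl : 3 ≤ l) (hodd : Odd l) :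
    ∃ (W : Type) (_ : Countable W) (U : SimpleGraph W),
      (∀ j, 3 ≤ j → j ≤ l → Odd j → IsEmpty (SimpleGraph.cycleGraph j →g U)) ∧
      ∀ (V : Type u) [Countable V] (G : SimpleGraph V),
        (∀ j, 3 ≤ j → j ≤ l → Odd j → IsEmpty (SimpleGraph.cycleGraph j →g G)) →
        Nonempty (G ↪g U) :=
  forbh_oddCycles_universal_general l hl
end

section
/- There exists a generic even-odd metric space: an even-odd metric space (U, d) on a countable nonempty type such that (i) every countable even-odd metric space admits a distance-preserving injective map into U, and (ii) every distance-preserving bijection between two finite subsets of U extends to a distance-preserving bijection of U onto itself. -/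
/-!
The generic space lives on `ℕ` and is built one point at a time. A finite set of prescribed
distances from a new point to old ones is *Katětov* when adding such a point keeps the axioms of
an even-odd metric; the Katětov formula `x ↦ min_t (t.2 + d t.1 x)` extends the prescriptions
consistently to all old points. Enumerating all finite prescriptions, each at infinitely many
stages, makes every Katětov prescription realized in the limit (the extension property), and from
the extension property a back-and-forth argument yields ultrahomogeneity, while the forth half
alone embeds every countable even-odd metric space.
-/

universe u

/-- An even-odd pair: the first component is `⊤` or an even natural number, the second
is `⊤` or an odd natural number (as elements of `ℕ∞`). -/
def IsEOPair (p : ℕ∞ × ℕ∞) : Prop :=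
  (p.1 = ⊤ ∨ ∃ n : ℕ, p.1 = (n : ℕ∞) ∧ Even n) ∧
  (p.2 = ⊤ ∨ ∃ n : ℕ, p.2 = (n : ℕ∞) ∧ Odd n)

/-- Sum of even-odd pairs: `(a,b) + (c,d) = (min(a+c, b+d), min(a+d, b+c))`. -/
noncomputable def eoAdd (p q : ℕ∞ × ℕ∞) : ℕ∞ × ℕ∞ :=
  (min (p.1 + q.1) (p.2 + q.2), min (p.1 + q.2) (p.2 + q.1))

/-- Componentwise order on even-odd pairs. -/
def eoLe (p q : ℕ∞ × ℕ∞) : Prop := p.1 ≤ q.1 ∧ p.2 ≤ q.2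

/-- An even-odd metric space: a distance function with values in even-odd pairs,
whose first component vanishes exactly on the diagonal, which is symmetric and
satisfies the triangle inequality. -/
structure IsEOMetric (S : Type*) (d : S → S → ℕ∞ × ℕ∞) : Prop where
  isEO : ∀ x y, IsEOPair (d x y)
  fst_eq_zero_iff : ∀ x y, (d x y).1 = 0 ↔ x = y
  symm : ∀ x y, d x y = d y x
  triangle : ∀ x y z, eoLe (d x z) (eoAdd (d x y) (d y z))

abbrev EOPair := ℕ∞ × ℕ∞

def TopOr (P : ℕ → Prop) (x : ℕ∞) : Prop := x = ⊤ ∨ ∃ n : ℕ, x = n ∧ P n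

namespace TopOr

variable {P Q R : ℕ → Prop} {x y : ℕ∞}

lemma top : TopOr P ⊤ := Or.inl rfl

lemma add (hPQ : ∀ m n, P m → Q n → R (m + n)) (hx : TopOr P x) (hy : TopOr Q y) :
    TopOr R (x + y) := by
  rcases hx with rfl | ⟨m, rfl, hm⟩
  · exact Or.inl (top_add y)
  rcases hy with rfl | ⟨n, rfl, hn⟩
  · exact Or.inl (add_top _)
  · exact Or.inr ⟨m + n, by push_cast; rfl, hPQ m n hm hn⟩

lemma min (hx : TopOr P x) (hy : TopOr P y) : TopOr P (min x y) := min_rec' _ hx hy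

lemma pos_of_odd (hx : TopOr Odd x) : 0 < x := by
  rcases hx with rfl | ⟨n, rfl, hn⟩
  · exact ENat.top_pos
  · exact_mod_cast hn.pos

end TopOr

lemma isEOPair_top : IsEOPair ⊤ := ⟨TopOr.top, TopOr.top⟩

lemma isEOPair_inf {p q : EOPair} (hp : IsEOPair p) (hq : IsEOPair q) : IsEOPair (p ⊓ q) :=
  ⟨TopOr.min hp.1 hq.1, TopOr.min hp.2 hq.2⟩

lemma isEOPair_eoAdd {p q : EOPair} (hp : IsEOPair p) (hq : IsEOPair q) :
    IsEOPair (eoAdd p q) :=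
  ⟨(TopOr.add (fun _ _ => Even.add) hp.1 hq.1).min (TopOr.add (fun _ _ => Odd.add_odd) hp.2 hq.2),
    (TopOr.add (fun _ _ => Even.add_odd) hp.1 hq.2).min
      (TopOr.add (fun _ _ => Odd.add_even) hp.2 hq.1)⟩

section eoAdd

variable {p q p' q' : EOPair}

lemma eoAdd_comm (p q : EOPair) : eoAdd p q = eoAdd q p := by
  simp only [eoAdd, add_comm p.1, add_comm p.2, min_comm (q.1 + p.2)]

lemma eoAdd_assoc (p q r : EOPair) : eoAdd (eoAdd p q) r = eoAdd p (eoAdd q r) := by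
  simp only [eoAdd, Prod.mk.injEq, min_add, add_min, ← add_assoc]
  constructor <;> rw [min_min_min_comm] <;> congr 1 <;> rw [min_comm]

instance : Std.Associative eoAdd := ⟨eoAdd_assoc⟩
instance : Std.Commutative eoAdd := ⟨eoAdd_comm⟩

@[gcongr]
lemma eoAdd_le_eoAdd (hp : p ≤ p') (hq : q ≤ q') : eoAdd p q ≤ eoAdd p' q' :=
  ⟨min_le_min (add_le_add hp.1 hq.1) (add_le_add hp.2 hq.2),
    min_le_min (add_le_add hp.1 hq.2) (add_le_add hp.2 hq.1)⟩

lemma eoAdd_le_left_of_fst_eq_zero (hq : q.1 = 0) : eoAdd p q ≤ p :=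
  ⟨by simp [eoAdd, hq], by simp [eoAdd, hq]⟩

lemma eoAdd_inf (p q r : EOPair) : eoAdd p (q ⊓ r) = eoAdd p q ⊓ eoAdd p r := by
  ext <;> simp only [eoAdd, Prod.fst_inf, Prod.snd_inf, add_min, min_min_min_comm]

lemma eoAdd_top (p : EOPair) : eoAdd p ⊤ = ⊤ := by
  ext <;> simp [eoAdd]

lemma eoAdd_finset_inf {ι : Type*} (p : EOPair) (s : Finset ι) (f : ι → EOPair) :
    eoAdd p (s.inf f) = s.inf fun i => eoAdd p (f i) :=
  Finset.apply_inf_eq_inf_comp _ (eoAdd_inf p) (eoAdd_top p)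

lemma finset_inf_eoAdd {ι : Type*} (s : Finset ι) (f : ι → EOPair) (p : EOPair) :
    eoAdd (s.inf f) p = s.inf fun i => eoAdd (f i) p := by
  simp only [eoAdd_comm _ p, eoAdd_finset_inf]

lemma fst_eoAdd_pos (hp : IsEOPair p) (hp0 : p.1 ≠ 0) : 0 < (eoAdd p q).1 :=
  lt_min ((pos_of_ne_zero hp0).trans_le le_self_add)
    ((TopOr.pos_of_odd hp.2).trans_le le_self_add)

end eoAdd

section Katetov

variable {X : Type*} {d d' : X → X → EOPair} {s : Set X}

structure IsEOMetricOn (d : X → X → EOPair) (s : Set X) : Prop where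
  isEOPair : ∀ x ∈ s, ∀ y ∈ s, IsEOPair (d x y)
  fst_eq_zero_iff : ∀ x ∈ s, ∀ y ∈ s, ((d x y).1 = 0 ↔ x = y)
  symm : ∀ x ∈ s, ∀ y ∈ s, d x y = d y x
  triangle : ∀ x ∈ s, ∀ y ∈ s, ∀ z ∈ s, d x z ≤ eoAdd (d x y) (d y z)

lemma IsEOMetricOn.congr (hd : IsEOMetricOn d s) (h : ∀ x ∈ s, ∀ y ∈ s, d' x y = d x y) :
    IsEOMetricOn d' s where
  isEOPair x hx y hy := h x hx y hy ▸ hd.isEOPair x hx y hy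
  fst_eq_zero_iff x hx y hy := h x hx y hy ▸ hd.fst_eq_zero_iff x hx y hy
  symm x hx y hy := by rw [h x hx y hy, h y hy x hx, hd.symm x hx y hy]
  triangle x hx y hy z hz := by
    rw [h x hx z hz, h x hx y hy, h y hy z hz]
    exact hd.triangle x hx y hy z hz

/-- `T` prescribes the distances `t.2` from a new point to the points `t.1`, and `(0, c)` is the
distance of the new point to itself: `IsKatetov d T c` says that these prescriptions satisfy the
axioms of an even-odd metric together with `d`. -/
structure IsKatetov (d : X → X → EOPair) (T : Set (X × EOPair)) (c : ℕ∞) : Prop where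
  odd : TopOr Odd c
  isEOPair : ∀ t ∈ T, IsEOPair t.2
  fst_ne_zero : ∀ t ∈ T, t.2.1 ≠ 0
  dist_le : ∀ t ∈ T, ∀ t' ∈ T, d t.1 t'.1 ≤ eoAdd t.2 t'.2
  le_eoAdd_dist : ∀ t ∈ T, ∀ t' ∈ T, t'.2 ≤ eoAdd t.2 (d t.1 t'.1)
  self_le : ∀ t ∈ T, ((0 : ℕ∞), c) ≤ eoAdd t.2 t.2
  le_self_eoAdd : ∀ t ∈ T, t.2 ≤ eoAdd ((0 : ℕ∞), c) t.2

lemma IsKatetov.congr {T : Set (X × EOPair)} {c : ℕ∞} (hT : IsKatetov d T c)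
    (h : ∀ t ∈ T, ∀ t' ∈ T, d' t.1 t'.1 = d t.1 t'.1) : IsKatetov d' T c where
  odd := hT.odd
  isEOPair := hT.isEOPair
  fst_ne_zero := hT.fst_ne_zero
  dist_le t ht t' ht' := h t ht t' ht' ▸ hT.dist_le t ht t' ht'
  le_eoAdd_dist t ht t' ht' := h t ht t' ht' ▸ hT.le_eoAdd_dist t ht t' ht'
  self_le := hT.self_le
  le_self_eoAdd := hT.le_self_eoAdd

def HasExtensionProperty (d : X → X → EOPair) : Prop :=
  ∀ (T : Finset (X × EOPair)) (c : ℕ∞), IsKatetov d T c →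
    ∃ u, d u u = ((0 : ℕ∞), c) ∧ ∀ t ∈ T, d u t.1 = t.2

noncomputable def katetovExt (d : X → X → EOPair) (T : Finset (X × EOPair)) (x : X) : EOPair :=
  T.inf fun t => eoAdd t.2 (d t.1 x)

variable {T : Finset (X × EOPair)} {c : ℕ∞}

lemma katetovExt_of_mem (hT : IsKatetov d T c) (hd : ∀ t ∈ T, (d t.1 t.1).1 = 0) {t}
    (ht : t ∈ T) : katetovExt d T t.1 = t.2 :=
  le_antisymm ((Finset.inf_le ht).trans (eoAdd_le_left_of_fst_eq_zero (hd t ht)))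
    (Finset.le_inf fun t' ht' => hT.le_eoAdd_dist t' ht' t ht)

lemma isKatetov_katetovExt (hd : IsEOMetricOn d s) (hTs : ∀ t ∈ T, t.1 ∈ s)
    (hT : IsKatetov d T c) : IsKatetov d ((fun x => (x, katetovExt d T x)) '' s) c where
  odd := hT.odd
  isEOPair := by
    rintro _ ⟨x, hx, rfl⟩
    exact Finset.inf_induction isEOPair_top (fun _ h₁ _ h₂ => isEOPair_inf h₁ h₂)
      fun t ht => isEOPair_eoAdd (hT.isEOPair t ht) (hd.isEOPair _ (hTs t ht) x hx)
  fst_ne_zero := by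
    rintro _ ⟨x, hx, rfl⟩
    exact Finset.inf_induction (p := fun q : EOPair => q.1 ≠ 0) (by simp)
      (fun _ h₁ _ h₂ => min_rec' (· ≠ 0) h₁ h₂)
      fun t ht => (fst_eoAdd_pos (hT.isEOPair t ht) (hT.fst_ne_zero t ht)).ne'
  dist_le := by
    rintro _ ⟨x, hx, rfl⟩ _ ⟨y, hy, rfl⟩
    dsimp only [katetovExt]
    rw [finset_inf_eoAdd]
    refine Finset.le_inf fun a ha => ?_
    rw [eoAdd_finset_inf]
    refine Finset.le_inf fun b hb => ?_
    have ha' := hTs a ha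
    have hb' := hTs b hb
    calc d x y ≤ eoAdd (d x a.1) (d a.1 y) := hd.triangle x hx a.1 ha' y hy
      _ ≤ eoAdd (d x a.1) (eoAdd (d a.1 b.1) (d b.1 y)) := by
          gcongr; exact hd.triangle a.1 ha' b.1 hb' y hy
      _ ≤ eoAdd (d a.1 x) (eoAdd (eoAdd a.2 b.2) (d b.1 y)) := by
          rw [hd.symm x hx a.1 ha']; gcongr; exact hT.dist_le a ha b hb
      _ = eoAdd (eoAdd a.2 (d a.1 x)) (eoAdd b.2 (d b.1 y)) := by ac_rfl
  le_eoAdd_dist := by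
    rintro _ ⟨x, hx, rfl⟩ _ ⟨y, hy, rfl⟩
    simp only [katetovExt, finset_inf_eoAdd]
    refine Finset.inf_mono_fun fun a ha => ?_
    calc eoAdd a.2 (d a.1 y) ≤ eoAdd a.2 (eoAdd (d a.1 x) (d x y)) := by
          gcongr; exact hd.triangle _ (hTs a ha) x hx y hy
      _ = eoAdd (eoAdd a.2 (d a.1 x)) (d x y) := (eoAdd_assoc _ _ _).symm
  self_le := by
    rintro _ ⟨x, hx, rfl⟩
    dsimp only [katetovExt]
    rw [finset_inf_eoAdd]
    refine Finset.le_inf fun a ha => ?_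
    rw [eoAdd_finset_inf]
    refine Finset.le_inf fun b hb => ?_
    have ha' := hTs a ha
    have hb' := hTs b hb
    calc ((0 : ℕ∞), c) ≤ eoAdd a.2 a.2 := hT.self_le a ha
      _ ≤ eoAdd a.2 (eoAdd b.2 (d b.1 a.1)) := by gcongr; exact hT.le_eoAdd_dist b hb a ha
      _ ≤ eoAdd a.2 (eoAdd b.2 (eoAdd (d b.1 x) (d a.1 x))) := by
          rw [← hd.symm x hx a.1 ha']; gcongr; exact hd.triangle _ hb' x hx _ ha'
      _ = eoAdd (eoAdd a.2 (d a.1 x)) (eoAdd b.2 (d b.1 x)) := by ac_rfl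
  le_self_eoAdd := by
    rintro _ ⟨x, hx, rfl⟩
    simp only [katetovExt, eoAdd_finset_inf]
    refine Finset.inf_mono_fun fun a ha => ?_
    calc eoAdd a.2 (d a.1 x) ≤ eoAdd (eoAdd ((0 : ℕ∞), c) a.2) (d a.1 x) := by
          gcongr; exact hT.le_self_eoAdd a ha
      _ = eoAdd ((0 : ℕ∞), c) (eoAdd a.2 (d a.1 x)) := eoAdd_assoc _ _ _

end Katetov

section OnePoint

variable {X : Type*} [DecidableEq X] {d : X → X → EOPair} {s : Set X} {z : X} {g : X → EOPair}
  {c : ℕ∞}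

def onePointExt (d : X → X → EOPair) (z : X) (g : X → EOPair) (c : ℕ∞) (x y : X) : EOPair :=
  if x = z then (if y = z then ((0 : ℕ∞), c) else g y) else if y = z then g x else d x y

@[simp] lemma onePointExt_self : onePointExt d z g c z z = ((0 : ℕ∞), c) := by simp [onePointExt]

lemma onePointExt_left {y : X} (hy : y ≠ z) : onePointExt d z g c z y = g y := by
  simp [onePointExt, hy]

lemma onePointExt_right {x : X} (hx : x ≠ z) : onePointExt d z g c x z = g x := by
  simp [onePointExt, hx]

lemma onePointExt_of_ne {x y : X} (hx : x ≠ z) (hy : y ≠ z) : onePointExt d z g c x y = d x y := by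
  simp [onePointExt, hx, hy]

lemma isEOMetricOn_onePointExt (hd : IsEOMetricOn d s) (hz : z ∉ s)
    (hg : IsKatetov d ((fun x => (x, g x)) '' s) c) :
    IsEOMetricOn (onePointExt d z g c) (insert z s) := by
  have ne : ∀ x ∈ s, x ≠ z := fun x hx h => hz (h ▸ hx)
  have mem : ∀ x ∈ s, (x, g x) ∈ (fun x => (x, g x)) '' s := fun x hx => ⟨x, hx, rfl⟩
  constructor
  · rintro x (rfl | hx) y (rfl | hy) <;>
      simp (disch := exact ne _ ‹_›) only [onePointExt_self, onePointExt_left, onePointExt_right,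
        onePointExt_of_ne]
    · exact ⟨Or.inr ⟨0, rfl, Even.zero⟩, hg.odd⟩
    · exact hg.isEOPair _ (mem y hy)
    · exact hg.isEOPair _ (mem x hx)
    · exact hd.isEOPair x hx y hy
  · rintro x (rfl | hx) y (rfl | hy) <;>
      simp (disch := exact ne _ ‹_›) only [onePointExt_self, onePointExt_left, onePointExt_right,
        onePointExt_of_ne]
    · exact iff_of_false (hg.fst_ne_zero _ (mem y hy)) (ne y hy).symm
    · exact iff_of_false (hg.fst_ne_zero _ (mem x hx)) (ne x hx)
    · exact hd.fst_eq_zero_iff x hx y hy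
  · rintro x (rfl | hx) y (rfl | hy) <;>
      simp (disch := exact ne _ ‹_›) only [onePointExt_self, onePointExt_left, onePointExt_right,
        onePointExt_of_ne]
    exact hd.symm x hx y hy
  · rintro x (rfl | hx) y (rfl | hy) w (rfl | hw) <;>
      simp (disch := exact ne _ ‹_›) only [onePointExt_self, onePointExt_left, onePointExt_right,
        onePointExt_of_ne]
    · exact ⟨by simp [eoAdd], by simp [eoAdd]⟩
    · exact hg.le_self_eoAdd _ (mem w hw)
    · exact hg.self_le _ (mem y hy)
    · exact hg.le_eoAdd_dist _ (mem y hy) _ (mem w hw)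
    · exact eoAdd_comm (g x) _ ▸ hg.le_self_eoAdd _ (mem x hx)
    · exact hg.dist_le _ (mem x hx) _ (mem w hw)
    · rw [hd.symm x hx y hy, eoAdd_comm]
      exact hg.le_eoAdd_dist _ (mem y hy) _ (mem x hx)
    · exact hd.triangle x hx y hy w hw

end OnePoint

namespace Generic

open Set

noncomputable def task : ℕ → Finset (ℕ × EOPair) × ℕ∞ :=
  (exists_surjective_nat _).choose

lemma task_surjective : Function.Surjective task :=
  (exists_surjective_nat _).choose_spec

open Classical in
/-- Stage `m` attempts task `m.unpair.2`, so every task is attempted at infinitely many stages. -/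
noncomputable def stageTask (d : ℕ → ℕ → EOPair) (m : ℕ) : Finset (ℕ × EOPair) × ℕ∞ :=
  if (∀ t ∈ (task m.unpair.2).1, t.1 < m) ∧ IsKatetov d (task m.unpair.2).1 (task m.unpair.2).2
  then task m.unpair.2 else (∅, 1)

lemma stageTask_spec (d : ℕ → ℕ → EOPair) (m : ℕ) :
    (∀ t ∈ (stageTask d m).1, t.1 < m) ∧ IsKatetov d (stageTask d m).1 (stageTask d m).2 := by
  unfold stageTask
  split_ifs with h
  · exact h
  · refine ⟨by simp, ⟨Or.inr ⟨1, rfl, odd_one⟩, ?_, ?_, ?_, ?_, ?_, ?_⟩⟩ <;> simp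

/-- Only the values on the first `m` points matter. -/
noncomputable def stage : ℕ → ℕ → ℕ → EOPair
  | 0 => fun _ _ => ⊤
  | m + 1 => onePointExt (stage m) m (katetovExt (stage m) (stageTask (stage m) m).1)
      (stageTask (stage m) m).2

lemma isEOMetricOn_stage (m : ℕ) : IsEOMetricOn (stage m) (Iio m) := by
  induction m with
  | zero => exact ⟨by simp, by simp, by simp, by simp⟩
  | succ m ih =>
    obtain ⟨hlt, hT⟩ := stageTask_spec (stage m) m
    rw [← Order.succ_eq_add_one, Order.Iio_succ_eq_insert]
    exact isEOMetricOn_onePointExt ih (lt_irrefl m) (isKatetov_katetovExt ih hlt hT)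

lemma stage_eq_of_le {m m' : ℕ} (h : m ≤ m') {i j : ℕ} (hi : i < m) (hj : j < m) :
    stage m' i j = stage m i j := by
  induction m', h using Nat.le_induction with
  | base => rfl
  | succ k hk ih => rw [stage, onePointExt_of_ne (by omega) (by omega), ih]

noncomputable def dist (i j : ℕ) : EOPair := stage (max i j + 1) i j

lemma dist_eq_stage {m i j : ℕ} (hi : i < m) (hj : j < m) : dist i j = stage m i j :=
  (stage_eq_of_le (by omega) (by omega) (by omega)).symm

lemma isEOMetric_dist : IsEOMetric ℕ dist := by
  have h m : IsEOMetricOn dist (Iio m) :=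
    (isEOMetricOn_stage m).congr fun i hi j hj => dist_eq_stage hi hj
  refine ⟨fun x y => ?_, fun x y => ?_, fun x y => ?_, fun x y w => ?_⟩
  · exact (h (max x y + 1)).isEOPair x (mem_Iio.2 (by omega)) y (mem_Iio.2 (by omega))
  · exact (h (max x y + 1)).fst_eq_zero_iff x (mem_Iio.2 (by omega)) y (mem_Iio.2 (by omega))
  · exact (h (max x y + 1)).symm x (mem_Iio.2 (by omega)) y (mem_Iio.2 (by omega))
  · exact (h (max x (max y w) + 1)).triangle x (mem_Iio.2 (by omega)) y (mem_Iio.2 (by omega)) w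
      (mem_Iio.2 (by omega))

lemma hasExtensionProperty_dist : HasExtensionProperty dist := by
  intro T c hT
  obtain ⟨k, hk⟩ := task_surjective (T, c)
  obtain ⟨n, hn⟩ := (T.image Prod.fst).exists_nat_subset_range
  set m := Nat.pair n k
  have hlt : ∀ t ∈ T, t.1 < m := fun t ht =>
    (Finset.mem_range.mp (hn (Finset.mem_image_of_mem _ ht))).trans_le (Nat.left_le_pair n k)
  have hTm : IsKatetov (stage m) T c :=
    hT.congr fun t ht t' ht' => (dist_eq_stage (hlt t ht) (hlt t' ht')).symm
  have hstage : stageTask (stage m) m = (T, c) := by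
    rw [stageTask, Nat.unpair_pair, hk, if_pos ⟨hlt, hTm⟩]
  refine ⟨m, ?_, fun t ht => ?_⟩
  · rw [dist_eq_stage (Nat.lt_succ_self m) (Nat.lt_succ_self m), stage, hstage, onePointExt_self]
  · rw [dist_eq_stage (Nat.lt_succ_self m) (Nat.lt_succ_of_lt (hlt t ht)), stage, hstage,
      onePointExt_left (hlt t ht).ne, katetovExt_of_mem hTm (fun t' ht' =>
      ((isEOMetricOn_stage m).fst_eq_zero_iff _ (hlt t' ht') _ (hlt t' ht')).2 rfl) ht]

end Generic

section BackAndForth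

variable {X Y : Type*} {dX : X → X → EOPair} {dY : Y → Y → EOPair}

lemma injective_of_dist_eq (hX : IsEOMetric X dX) (hY : IsEOMetric Y dY) {f : X → Y}
    (hf : ∀ x x', dY (f x) (f x') = dX x x') : Function.Injective f := fun x x' h =>
  (hX.fst_eq_zero_iff x x').1 (hf x x' ▸ h ▸ (hY.fst_eq_zero_iff _ _).2 rfl)

lemma IsEOMetric.dist_self (hX : IsEOMetric X dX) (x : X) : dX x x = ((0 : ℕ∞), (dX x x).2) :=
  Prod.ext ((hX.fst_eq_zero_iff x x).2 rfl) rfl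

variable (dX dY) in
/-- Finite partial isometries, encoded by their graphs. -/
def PartialIsometry : Type _ :=
  {R : Finset (X × Y) // ∀ p ∈ R, ∀ q ∈ R, dY p.2 q.2 = dX p.1 q.1}

namespace PartialIsometry

instance : Preorder (PartialIsometry dX dY) := Subtype.preorder _

open scoped Classical

lemma isKatetov_image (hX : IsEOMetric X dX) (R : PartialIsometry dX dY) (x : X)
    (hx : ∀ p ∈ R.1, p.1 ≠ x) :
    IsKatetov dY ↑(R.1.image fun p => (p.2, dX x p.1)) (dX x x).2 where
  odd := (hX.isEO x x).2
  isEOPair := Finset.forall_mem_image.2 fun p _ => hX.isEO x p.1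
  fst_ne_zero := Finset.forall_mem_image.2 fun p hp h =>
    hx p hp ((hX.fst_eq_zero_iff x p.1).1 h).symm
  dist_le := Finset.forall_mem_image.2 fun p hp => Finset.forall_mem_image.2 fun q hq => by
    rw [R.2 p hp q hq, hX.symm x p.1]
    exact hX.triangle _ _ _
  le_eoAdd_dist := Finset.forall_mem_image.2 fun p hp => Finset.forall_mem_image.2 fun q hq => by
    rw [R.2 p hp q hq]
    exact hX.triangle _ _ _
  self_le := Finset.forall_mem_image.2 fun p _ => by
    rw [← hX.dist_self]
    have h := hX.triangle x p.1 x
    rwa [hX.symm p.1 x] at h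
  le_self_eoAdd := Finset.forall_mem_image.2 fun p _ => by
    rw [← hX.dist_self]
    exact hX.triangle _ _ _

lemma exists_across (hX : IsEOMetric X dX) (hYext : HasExtensionProperty dY)
    (R : PartialIsometry dX dY) (x : X) :
    ∃ y, dY y y = dX x x ∧ ∀ p ∈ R.1, dY y p.2 = dX x p.1 := by
  by_cases h : ∃ y, (x, y) ∈ R.1
  · obtain ⟨y, hy⟩ := h
    exact ⟨y, R.2 _ hy _ hy, fun p hp => R.2 _ hy _ hp⟩
  push Not at h
  obtain ⟨y, hyy, hy⟩ :=
    hYext _ _ (R.isKatetov_image hX x fun p hp hpx => h p.2 (by subst hpx; exact hp))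
  refine ⟨y, hyy.trans (hX.dist_self x).symm, fun p hp => ?_⟩
  exact hy _ (Finset.mem_image_of_mem _ hp)

protected noncomputable def comm (R : PartialIsometry dX dY) : PartialIsometry dY dX :=
  ⟨R.1.image Prod.swap, Finset.forall_mem_image.2 fun p hp => Finset.forall_mem_image.2
    fun q hq => (R.2 p hp q hq).symm⟩

noncomputable def definedAtLeft (hX : IsEOMetric X dX) (hY : IsEOMetric Y dY)
    (hYext : HasExtensionProperty dY) (x : X) : Order.Cofinal (PartialIsometry dX dY) where
  carrier := {R | ∃ y, (x, y) ∈ R.1}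
  isCofinal R := by
    obtain ⟨y, hyy, hy⟩ := exists_across hX hYext R x
    refine ⟨⟨insert (x, y) R.1, ?_⟩, ⟨y, Finset.mem_insert_self _ _⟩, Finset.subset_insert _ _⟩
    intro p hp q hq
    rw [Finset.mem_insert] at hp hq
    rcases hp with rfl | hp <;> rcases hq with rfl | hq
    · exact hyy
    · exact hy q hq
    · rw [hY.symm, hX.symm]
      exact hy p hp
    · exact R.2 p hp q hq

noncomputable def definedAtRight (hX : IsEOMetric X dX) (hY : IsEOMetric Y dY)
    (hXext : HasExtensionProperty dX) (y : Y) : Order.Cofinal (PartialIsometry dX dY) where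
  carrier := {R | ∃ x, (x, y) ∈ R.1}
  isCofinal R := by
    obtain ⟨R', ⟨x, hx⟩, hle⟩ := (definedAtLeft hY hX hXext y).isCofinal R.comm
    refine ⟨R'.comm, ⟨x, Finset.mem_image.2 ⟨(y, x), hx, rfl⟩⟩, fun p hp => ?_⟩
    exact Finset.mem_image.2 ⟨p.swap, hle (Finset.mem_image_of_mem _ hp), p.swap_swap⟩

lemma dist_eq_of_mem_ideal {I : Order.Ideal (PartialIsometry dX dY)} {R R'} (hR : R ∈ I)
    (hR' : R' ∈ I) {p q : X × Y} (hp : p ∈ R.1) (hq : q ∈ R'.1) : dY p.2 q.2 = dX p.1 q.1 := by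
  obtain ⟨R'', -, hle, hle'⟩ := I.directed R hR R' hR'
  exact R''.2 p (hle hp) q (hle' hq)

lemma exists_isometry_of_ideal (hX : IsEOMetric X dX) (hY : IsEOMetric Y dY)
    (I : Order.Ideal (PartialIsometry dX dY)) (hI : ∀ x, ∃ R ∈ I, ∃ y, (x, y) ∈ R.1) :
    ∃ f : X → Y, (∀ x x', dY (f x) (f x') = dX x x') ∧ ∀ R ∈ I, ∀ p ∈ R.1, f p.1 = p.2 := by
  choose R hRI f hf using hI
  refine ⟨f, fun x x' => dist_eq_of_mem_ideal (hRI x) (hRI x') (hf x) (hf x'), ?_⟩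
  intro R' hR' p hp
  have h := dist_eq_of_mem_ideal (hRI p.1) hR' (hf p.1) hp
  exact (hY.fst_eq_zero_iff _ _).1 (h ▸ (hX.fst_eq_zero_iff _ _).2 rfl)

end PartialIsometry

open PartialIsometry

theorem exists_isometry_of_countable [Countable X] (hX : IsEOMetric X dX)
    (hY : IsEOMetric Y dY) (hYext : HasExtensionProperty dY) :
    ∃ f : X → Y, ∀ x x', dY (f x) (f x') = dX x x' := by
  have := Encodable.ofCountable X
  let I := Order.idealOfCofinals (⟨∅, by simp⟩ : PartialIsometry dX dY)
    (definedAtLeft hX hY hYext)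
  obtain ⟨f, hf, -⟩ := exists_isometry_of_ideal hX hY I fun x =>
    (Order.cofinal_meets_idealOfCofinals _ _ x).imp fun _ h => ⟨h.2, h.1⟩
  exact ⟨f, hf⟩

theorem exists_equiv_isometry_extending [Countable X] [Countable Y] (hX : IsEOMetric X dX)
    (hY : IsEOMetric Y dY) (hXext : HasExtensionProperty dX) (hYext : HasExtensionProperty dY)
    (R : PartialIsometry dX dY) :
    ∃ φ : X ≃ Y, (∀ x x', dY (φ x) (φ x') = dX x x') ∧ ∀ p ∈ R.1, φ p.1 = p.2 := by
  have := Encodable.ofCountable X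
  have := Encodable.ofCountable Y
  let D : X ⊕ Y → Order.Cofinal (PartialIsometry dX dY) :=
    Sum.elim (definedAtLeft hX hY hYext) (definedAtRight hX hY hXext)
  let I := Order.idealOfCofinals R D
  obtain ⟨f, hf, hfI⟩ := exists_isometry_of_ideal hX hY I fun x =>
    (Order.cofinal_meets_idealOfCofinals R D (Sum.inl x)).imp fun _ h => ⟨h.2, h.1⟩
  have hsurj : Function.Surjective f := fun y => by
    obtain ⟨R', ⟨x, hx⟩, hR'⟩ := Order.cofinal_meets_idealOfCofinals R D (Sum.inr y)
    exact ⟨x, hfI R' hR' _ hx⟩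
  refine ⟨Equiv.ofBijective f ⟨injective_of_dist_eq hX hY hf, hsurj⟩, hf, ?_⟩
  exact hfI R (Order.mem_idealOfCofinals _ _)

end BackAndForth

/-- There exists a generic even-odd metric space: countable, universal for countable
even-odd metric spaces, and ultrahomogeneous. -/
theorem exists_generic_evenOdd_metric_space :
    ∃ (U : Type) (dU : U → U → ℕ∞ × ℕ∞),
      Countable U ∧ Nonempty U ∧ IsEOMetric U dU ∧
      (∀ (S : Type u) (dS : S → S → ℕ∞ × ℕ∞), Countable S → IsEOMetric S dS →
        ∃ f : S → U, Function.Injective f ∧ ∀ x y : S, dU (f x) (f y) = dS x y) ∧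
      ∀ (A B : Finset U) (e : (A : Set U) ≃ (B : Set U)),
        (∀ x y : (A : Set U), dU ((e x : U)) ((e y : U)) = dU (x : U) (y : U)) →
        ∃ φ : U ≃ U, (∀ x y : U, dU (φ x) (φ y) = dU x y) ∧
          ∀ x : (A : Set U), φ (x : U) = ((e x) : U) := by
  have hU := Generic.isEOMetric_dist
  have hUext := Generic.hasExtensionProperty_dist
  refine ⟨ℕ, Generic.dist, inferInstance, inferInstance, hU, fun S dS _ hS => ?_,
    fun A B e he => ?_⟩
  · obtain ⟨f, hf⟩ := exists_isometry_of_countable hS hU hUext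
    exact ⟨f, injective_of_dist_eq hS hU hf, hf⟩
  · let R : PartialIsometry Generic.dist Generic.dist :=
      ⟨A.attach.image fun a => (a.1, (e a).1),
        Finset.forall_mem_image.2 fun a _ => Finset.forall_mem_image.2 fun b _ => he a b⟩
    obtain ⟨φ, hφ, hφR⟩ := exists_equiv_isometry_extending hU hU hUext hUext R
    exact ⟨φ, hφ, fun a => hφR _ (Finset.mem_image_of_mem _ (Finset.mem_attach _ a))⟩
end
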